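/- arXiv:2312.16480 — 3 statements merged into one kernel-verified Lean document; each statement's English description precedes it below -/
import Mathlib

section
/- There exists a set X with a group action of all (not necessarily finite) permutations of atoms, and an element x ∈ X, such that x is supported by the empty set (every finite permutation fixes x) yet the infinite 'shift' permutation does not fix x. Concretely, fix a bijection f between the atoms A and the integers ℤ; let shift be the permutation a ↦ f⁻¹(f(a)+1); let x be the set of all sequences (π(f⁻¹(0)), π(f⁻¹(-1)), π(f⁻¹(1)), π(f⁻¹(-2)), ...) for π ranging over finite permutations, with permutations acting pointwise on sequences. Then every finite permutation fixes x but shift·x ≠ x. -/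
open Pointwise

abbrev Atom := ℤ
abbrev APerm := Equiv.Perm Atom

def Aneg : Set Atom := {a | a < 0}
def Apos : Set Atom := {a | 0 ≤ a}

/-- A finite permutation: moves only finitely many atoms. -/
def FinitePerm (π : APerm) : Prop := {a : Atom | π a ≠ a}.Finite

/-- A permission set: (A< ∪ P) \ Q with P ⊆ A>, Q ⊆ A< finite. -/
def IsPermissionSet (S : Set Atom) : Prop :=
  ∃ P Q : Finset Atom, (P : Set Atom) ⊆ Apos ∧ (Q : Set Atom) ⊆ Aneg ∧
    S = (Aneg ∪ (P : Set Atom)) \ (Q : Set Atom)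

/-- A set of atoms B supports x when every finite permutation fixing B pointwise fixes x. -/
def Supports {X : Type*} [MulAction APerm X] (B : Set Atom) (x : X) : Prop :=
  ∀ π : APerm, FinitePerm π → (∀ a ∈ B, π a = a) → π • x = x

/-- The least support: intersection of all supporting sets. -/
def supp {X : Type*} [MulAction APerm X] (x : X) : Set Atom :=
  ⋂₀ {B : Set Atom | Supports B x}

/-- A permissive-nominal set: every element is supported by some permission set. -/
def IsPNSet (X : Type*) [MulAction APerm X] : Prop :=
  ∀ x : X, ∃ S : Set Atom, IsPermissionSet S ∧ Supports S x

/-- The enumeration 0, -1, 1, -2, 2, ... of the atoms (= ℤ). -/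
def enumAtom (n : ℕ) : Atom := if n % 2 = 0 then (n / 2 : ℤ) else -((n / 2 : ℤ) + 1)

/-- The shift permutation a ↦ a + 1 (via the identity bijection f : Atom → ℤ). -/
def shiftPerm : APerm := Equiv.addRight 1

/-- Pointwise action of a permutation on a set of sequences of atoms. -/
def pactSeq (π : APerm) (S : Set (ℕ → Atom)) : Set (ℕ → Atom) :=
  (fun s => fun n => π (s n)) '' S

/-- The set of all sequences (π(0), π(-1), π(1), π(-2), ...) for π finite. -/
def fuzzyX : Set (ℕ → Atom) :=
  {s | ∃ π : APerm, FinitePerm π ∧ s = fun n => π (enumAtom n)}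

/-!
Finite permutations form a group, and `fuzzyX` is the image of that group under `π ↦ π ∘ enumAtom`;
acting by a finite permutation only translates the group onto itself. Since `enumAtom` is
surjective, a sequence `π ∘ enumAtom` determines `π`, so `shiftPerm ∘ enumAtom` would lie in
`fuzzyX` only if `shiftPerm` itself were finite, which it is not: it moves every atom.
-/

lemma finitePerm_iff {π : APerm} : FinitePerm π ↔ (MulAction.fixedBy Atom π)ᶜ.Finite := Iff.rfl

lemma finitePerm_one : FinitePerm 1 := by
  simp [finitePerm_iff]

lemma FinitePerm.mul {π σ : APerm} (hπ : FinitePerm π) (hσ : FinitePerm σ) :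
    FinitePerm (π * σ) := by
  rw [finitePerm_iff] at *
  refine (hπ.union hσ).subset ?_
  rw [← Set.compl_inter]
  exact Set.compl_subset_compl.mpr (MulAction.fixedBy_mul (α := Atom) π σ)

lemma FinitePerm.inv {π : APerm} (hπ : FinitePerm π) : FinitePerm π⁻¹ := by
  rwa [finitePerm_iff, MulAction.fixedBy_inv]

lemma not_finitePerm_shiftPerm : ¬ FinitePerm shiftPerm := by
  have hmoved : {a : Atom | shiftPerm a ≠ a} = Set.univ := by
    ext a
    simp [shiftPerm]
  rw [FinitePerm, hmoved]
  exact Set.infinite_univ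

lemma enumAtom_two_mul (k : ℕ) : enumAtom (2 * k) = k := by
  simp [enumAtom]

lemma enumAtom_two_mul_add_one (k : ℕ) : enumAtom (2 * k + 1) = Int.negSucc k := by
  rw [enumAtom, if_neg (by omega), Int.negSucc_eq]
  -- `omega` does not unfold the abbreviation `Atom`
  change -((((2 * k + 1 : ℕ) : ℤ)) / 2 + 1) = -((k : ℤ) + 1)
  omega

lemma enumAtom_surjective : Function.Surjective enumAtom
  | Int.ofNat k => ⟨2 * k, enumAtom_two_mul k⟩
  | Int.negSucc k => ⟨2 * k + 1, enumAtom_two_mul_add_one k⟩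

lemma pactSeq_mul (π σ : APerm) (S : Set (ℕ → Atom)) :
    pactSeq π (pactSeq σ S) = pactSeq (π * σ) S := by
  simp only [pactSeq, Set.image_image, Equiv.Perm.mul_apply]

lemma pactSeq_one (S : Set (ℕ → Atom)) : pactSeq 1 S = S := by
  simp [pactSeq]

lemma mem_fuzzyX_iff {π : APerm} : (fun n => π (enumAtom n)) ∈ fuzzyX ↔ FinitePerm π := by
  refine ⟨fun ⟨σ, hσ, hσπ⟩ => ?_, fun hπ => ⟨π, hπ, rfl⟩⟩
  have hfun : ⇑π = ⇑σ := enumAtom_surjective.injective_comp_right hσπ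
  rwa [DFunLike.coe_injective hfun]

lemma pactSeq_fuzzyX_subset {π : APerm} (hπ : FinitePerm π) : pactSeq π fuzzyX ⊆ fuzzyX := by
  rintro _ ⟨_, ⟨σ, hσ, rfl⟩, rfl⟩
  exact ⟨π * σ, hπ.mul hσ, rfl⟩

lemma pactSeq_fuzzyX {π : APerm} (hπ : FinitePerm π) : pactSeq π fuzzyX = fuzzyX := by
  refine (pactSeq_fuzzyX_subset hπ).antisymm ?_
  calc fuzzyX = pactSeq π (pactSeq π⁻¹ fuzzyX) := by rw [pactSeq_mul, mul_inv_cancel, pactSeq_one]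
    _ ⊆ pactSeq π fuzzyX := Set.image_mono (pactSeq_fuzzyX_subset hπ.inv)

/-- There is an element supported by the empty set (every finite permutation fixes it)
which is not fixed by the shift permutation. -/
theorem stmt_3 :
    (∀ π : APerm, FinitePerm π → pactSeq π fuzzyX = fuzzyX) ∧
    pactSeq shiftPerm fuzzyX ≠ fuzzyX := by
  refine ⟨fun π hπ => pactSeq_fuzzyX hπ, fun h => not_finitePerm_shiftPerm ?_⟩
  have hshift : (fun n => shiftPerm (enumAtom n)) ∈ pactSeq shiftPerm fuzzyX :=
    ⟨enumAtom, mem_fuzzyX_iff.mpr finitePerm_one, rfl⟩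
  rw [h] at hshift
  exact mem_fuzzyX_iff.mp hshift
end

section
/- α-equivalence on permissive-nominal terms is an equivalence relation (reflexive, symmetric, and transitive). -/
open Pointwise

/-- A permissive-nominal signature: term-formers and unknowns with permission sets. -/
structure Sig where
  TermFormer : Type
  Unknown : Type
  pmss : Unknown → Set Atom
  pmss_isPermissionSet : ∀ X, IsPermissionSet (pmss X)

/-- Raw permissive-nominal terms: atoms, tuples (built from unit and pairing),
term-former applications, atom-abstractions, and moderated unknowns π·X. -/
inductive PreTerm (σ : Sig) : Type
  | atom : Atom → PreTerm σ
  | unit : PreTerm σ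
  | pair : PreTerm σ → PreTerm σ → PreTerm σ
  | app : σ.TermFormer → PreTerm σ → PreTerm σ
  | abs : Atom → PreTerm σ → PreTerm σ
  | unk : APerm → σ.Unknown → PreTerm σ

namespace PreTerm

variable {σ : Sig}

/-- Free atoms of a term. -/
def fa : PreTerm σ → Set Atom
  | atom a => {a}
  | unit => ∅
  | pair r s => fa r ∪ fa s
  | app _ r => fa r
  | abs a r => fa r \ {a}
  | unk π X => (fun a => π a) '' σ.pmss X

/-- Permutation action on terms. -/
def pact (π : APerm) : PreTerm σ → PreTerm σ
  | atom a => atom (π a)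
  | unit => unit
  | pair r s => pair (pact π r) (pact π s)
  | app f r => app f (pact π r)
  | abs a r => abs (π a) (pact π r)
  | unk π' X => unk (π * π') X

/-- α-equivalence: the least congruence with [a]r ≈ [b]s when b ∉ fa r and
(b a)·r ≈ s, and π·X ≈ π'·X when π and π' agree on pmss X. -/
inductive Aeq : PreTerm σ → PreTerm σ → Prop
  | atom (a : Atom) : Aeq (atom a) (atom a)
  | unit : Aeq unit unit
  | pair {r r' s s' : PreTerm σ} : Aeq r r' → Aeq s s' → Aeq (pair r s) (pair r' s')
  | app (f : σ.TermFormer) {r s : PreTerm σ} : Aeq r s → Aeq (app f r) (app f s)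
  | absCongr (a : Atom) {r s : PreTerm σ} : Aeq r s → Aeq (abs a r) (abs a s)
  | abs (a b : Atom) {r s : PreTerm σ} : b ≠ a → b ∉ fa r →
      Aeq (pact (Equiv.swap b a) r) s → Aeq (abs a r) (abs b s)
  | unk (π π' : APerm) (X : σ.Unknown) :
      (∀ a ∈ σ.pmss X, π a = π' a) → Aeq (unk π X) (unk π' X)

end PreTerm


namespace PreTerm

variable {σ : Sig}

def size : PreTerm σ → ℕ
  | atom _ => 1
  | unit => 1
  | pair r s => size r + size s + 1
  | app _ r => size r + 1
  | abs _ r => size r + 1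
  | unk _ _ => 1

lemma size_pos (r : PreTerm σ) : 0 < size r := by
  cases r <;> simp [size]

lemma size_pact (π : APerm) (r : PreTerm σ) : size (pact π r) = size r := by
  induction r generalizing π <;> simp [pact, size, *]

lemma pact_one (r : PreTerm σ) : pact 1 r = r := by
  induction r <;> simp [pact, *]

lemma pact_mul (π π' : APerm) (r : PreTerm σ) :
    pact π (pact π' r) = pact (π * π') r := by
  induction r generalizing π π' <;> simp [pact, mul_assoc, *]

lemma fa_pact (π : APerm) (r : PreTerm σ) : fa (pact π r) = π '' fa r := by
  induction r generalizing π with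
  | atom a => simp [pact, fa]
  | unit => simp [pact, fa]
  | pair r s ihr ihs => simp [pact, fa, Set.image_union, ihr, ihs]
  | app f r ih => simp [pact, fa, ih]
  | abs a r ih =>
      simp only [pact, fa, ih]
      rw [Set.image_diff π.injective, Set.image_singleton]
  | unk π' X =>
      simp only [pact, fa]
      rw [← Set.image_comp]
      rfl

lemma aeq_pact {r s : PreTerm σ} (π : APerm) (h : Aeq r s) :
    Aeq (pact π r) (pact π s) := by
  induction h generalizing π with
  | atom a => exact Aeq.atom _
  | unit => exact Aeq.unit
  | pair _ _ ih1 ih2 => exact Aeq.pair (ih1 π) (ih2 π)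
  | app f _ ih => exact Aeq.app f (ih π)
  | absCongr a _ ih => exact Aeq.absCongr _ (ih π)
  | @abs a b r1 s1 hba hbfa h ih =>
      refine Aeq.abs (π a) (π b) (π.injective.ne hba) ?_ ?_
      · rw [fa_pact]
        rintro ⟨x, hx, hxe⟩
        exact hbfa (π.injective hxe ▸ hx)
      · have := ih π
        rwa [pact_mul, Equiv.mul_swap_eq_swap_mul, ← pact_mul] at this
  | unk π1 π2 X hag =>
      exact Aeq.unk _ _ X fun a ha => by simp [hag a ha]

lemma aeq_fa {r s : PreTerm σ} (h : Aeq r s) : fa r = fa s := by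
  induction h with
  | atom a => rfl
  | unit => rfl
  | pair _ _ ih1 ih2 => simp [fa, ih1, ih2]
  | app f _ ih => simp [fa, ih]
  | absCongr a _ ih => simp [fa, ih]
  | @abs a b r1 s1 hba hbfa h ih =>
      have hfs : fa s1 = ⇑(Equiv.swap b a) '' fa r1 := by rw [← ih, fa_pact]
      simp only [fa, hfs]
      ext x
      simp only [Set.mem_diff, Set.mem_image, Set.mem_singleton_iff]
      constructor
      · rintro ⟨hx, hxa⟩
        have hxb : x ≠ b := fun hh => hbfa (hh ▸ hx)
        exact ⟨⟨x, hx, Equiv.swap_apply_of_ne_of_ne hxb hxa⟩, hxb⟩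
      · rintro ⟨⟨y, hy, rfl⟩, hxb⟩
        have hyb : y ≠ b := fun hh => hbfa (hh ▸ hy)
        have hya : y ≠ a := by
          rintro rfl
          exact hxb (Equiv.swap_apply_right b y)
        rw [Equiv.swap_apply_of_ne_of_ne hyb hya]
        exact ⟨hy, hya⟩
  | unk π1 π2 X hag =>
      simp only [fa]
      ext x
      constructor
      · rintro ⟨y, hy, rfl⟩; exact ⟨y, hy, (hag y hy).symm⟩
      · rintro ⟨y, hy, rfl⟩; exact ⟨y, hy, hag y hy⟩

lemma aeq_refl (r : PreTerm σ) : Aeq r r := by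
  induction r with
  | atom a => exact Aeq.atom a
  | unit => exact Aeq.unit
  | pair _ _ ih1 ih2 => exact Aeq.pair ih1 ih2
  | app f _ ih => exact Aeq.app f ih
  | abs a _ ih => exact Aeq.absCongr a ih
  | unk π X => exact Aeq.unk π π X fun _ _ => rfl

lemma aeq_agree (r : PreTerm σ) : ∀ π π' : APerm,
    (∀ a ∈ fa r, π a = π' a) → Aeq (pact π r) (pact π' r) := by
  induction r with
  | atom a => intro π π' h; rw [pact, pact, h a rfl]; exact aeq_refl _
  | unit => intro π π' h; exact Aeq.unit
  | pair r s ihr ihs =>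
      intro π π' h
      exact Aeq.pair (ihr _ _ fun a ha => h a (Or.inl ha))
        (ihs _ _ fun a ha => h a (Or.inr ha))
  | app f r ih => intro π π' h; exact Aeq.app f (ih _ _ h)
  | abs a r ih =>
      intro π π' h
      rcases eq_or_ne (π a) (π' a) with heq | hne
      · simp only [pact, heq]
        exact Aeq.absCongr _ (ih π π' fun x hx => by
          rcases eq_or_ne x a with rfl | hxa
          · exact heq
          · exact h x ⟨hx, hxa⟩)
      · simp only [pact]
        refine Aeq.abs (π a) (π' a) (Ne.symm hne) ?_ ?_
        · rw [fa_pact]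
          rintro ⟨x, hx, hxe⟩
          have hxa : x ≠ a := fun hh => hne (hh ▸ hxe)
          have hππ : π x = π' x := h x ⟨hx, hxa⟩
          exact hxa (π'.injective (hππ ▸ hxe))
        · rw [pact_mul]
          refine ih _ _ fun x hx => ?_
          rcases eq_or_ne x a with rfl | hxa
          · simp
          · have hππ : π x = π' x := h x ⟨hx, hxa⟩
            simp only [Equiv.Perm.mul_apply]
            rw [Equiv.swap_apply_of_ne_of_ne
              (fun he => hxa (π'.injective (hππ ▸ he)))
              (fun he => hxa (π.injective he)), hππ]
  | unk π1 X =>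
      intro π π' h
      exact Aeq.unk _ _ X fun a ha => by
        simp only [Equiv.Perm.mul_apply]
        exact h (π1 a) ⟨a, ha, rfl⟩

lemma aeq_symm {r s : PreTerm σ} (h : Aeq r s) : Aeq s r := by
  induction h with
  | atom a => exact Aeq.atom a
  | unit => exact Aeq.unit
  | pair _ _ ih1 ih2 => exact Aeq.pair ih1 ih2
  | app f _ ih => exact Aeq.app f ih
  | absCongr a _ ih => exact Aeq.absCongr a ih
  | @abs a b r1 s1 hba hbfa h ih =>
      refine Aeq.abs b a (Ne.symm hba) ?_ ?_
      · rw [← aeq_fa h, fa_pact]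
        rintro ⟨x, hx, hxe⟩
        have hxb : x = b :=
          (Equiv.swap b a).injective (hxe.trans (Equiv.swap_apply_left b a).symm)
        exact hbfa (hxb ▸ hx)
      · have := aeq_pact (Equiv.swap a b) ih
        have h1 : Equiv.swap a b * Equiv.swap b a = 1 := by
          rw [Equiv.swap_comm a b, Equiv.swap_mul_self]
        rwa [pact_mul, h1, pact_one] at this
  | unk π1 π2 X hag => exact Aeq.unk _ _ X fun a ha => (hag a ha).symm

lemma aeq_trans_aux (n : ℕ) : ∀ r s t : PreTerm σ, size r ≤ n →
    Aeq r s → Aeq s t → Aeq r t := by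
  induction n with
  | zero => intro r s t hn; have := size_pos r; omega
  | succ n ih =>
    intro r s t hn h1 h2
    cases h1 with
    | atom a => exact h2
    | unit => exact h2
    | @pair r1 r1' s1 s1' hr hs =>
        cases h2 with
        | pair hr' hs' =>
            simp only [size] at hn
            have p1 := size_pos r1
            have p2 := size_pos s1
            exact Aeq.pair (ih _ _ _ (by omega) hr hr') (ih _ _ _ (by omega) hs hs')
    | @app f r1 s1 hr =>
        cases h2 with
        | app _ hr' =>
            simp only [size] at hn
            exact Aeq.app f (ih _ _ _ (by omega) hr hr')
    | @absCongr a r1 s1 hr =>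
        cases h2 with
        | absCongr _ hr' =>
            simp only [size] at hn
            exact Aeq.absCongr a (ih _ _ _ (by omega) hr hr')
        | abs _ c hca hcfs hr' =>
            simp only [size] at hn
            refine Aeq.abs a c hca (by rw [aeq_fa hr]; exact hcfs) ?_
            exact ih _ _ _ (by rw [size_pact]; omega) (aeq_pact _ hr) hr'
    | @abs a b r1 s1 hba hbfa hr =>
        cases h2 with
        | absCongr _ hr' =>
            simp only [size] at hn
            exact Aeq.abs a b hba hbfa
              (ih _ _ _ (by rw [size_pact]; omega) hr hr')
        | @abs _ c _ t1 hcb hcfs hr' =>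
            simp only [size] at hn
            have key : Aeq (pact (Equiv.swap c b) (pact (Equiv.swap b a) r1)) t1 :=
              ih _ _ _ (by rw [size_pact, size_pact]; omega) (aeq_pact _ hr) hr'
            rcases eq_or_ne c a with rfl | hca
            · refine Aeq.absCongr c ?_
              have h1 : Equiv.swap c b * Equiv.swap b c = 1 := by
                rw [Equiv.swap_comm c b, Equiv.swap_mul_self]
              rw [pact_mul, h1, pact_one] at key
              exact key
            · have hcfr : c ∉ fa r1 := by
                intro hc
                apply hcfs
                rw [← aeq_fa hr, fa_pact]
                exact ⟨c, hc, Equiv.swap_apply_of_ne_of_ne hcb hca⟩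
              refine Aeq.abs a c hca hcfr ?_
              rw [pact_mul] at key
              have hag2 : Aeq (pact (Equiv.swap c a) r1)
                  (pact (Equiv.swap c b * Equiv.swap b a) r1) := by
                refine aeq_agree _ _ _ fun x hx => ?_
                have hxb : x ≠ b := fun hh => hbfa (hh ▸ hx)
                have hxc : x ≠ c := fun hh => hcfr (hh ▸ hx)
                rcases eq_or_ne x a with rfl | hxa
                · simp
                · rw [Equiv.swap_apply_of_ne_of_ne hxc hxa]
                  simp only [Equiv.Perm.mul_apply]
                  rw [Equiv.swap_apply_of_ne_of_ne hxb hxa,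
                    Equiv.swap_apply_of_ne_of_ne hxc hxb]
              exact ih _ _ _ (by rw [size_pact]; omega) hag2 key
    | unk π1 π2 X hag =>
        cases h2 with
        | unk _ π3 _ hag' =>
            exact Aeq.unk _ _ X fun a ha => (hag a ha).trans (hag' a ha)

lemma aeq_trans {r s t : PreTerm σ} (h1 : Aeq r s) (h2 : Aeq s t) : Aeq r t :=
  aeq_trans_aux (size r) r s t le_rfl h1 h2

end PreTerm

/-- α-equivalence is an equivalence relation. -/
theorem stmt_12 {σ : Sig} : Equivalence (PreTerm.Aeq (σ := σ)) :=
  ⟨PreTerm.aeq_refl, PreTerm.aeq_symm, PreTerm.aeq_trans⟩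
end

section
/- Denotations commute with substitution: for any interpretation I of a permissive-nominal signature, valuation ς, unknown X and term t with fa(t) ⊆ pmss(X) and t of sort sort(X): the denotation of r[X ↦ t] under ς equals the denotation of r under the updated valuation ς[X ↦ ⟦t⟧ς]. -/
open Pointwise

namespace PreTerm
variable {σ : Sig}

/-- Substitution action on terms. -/
def subst (θ : σ.Unknown → PreTerm σ) : PreTerm σ → PreTerm σ
  | atom a => atom a
  | unit => unit
  | pair r s => pair (subst θ r) (subst θ s)
  | app f r => app f (subst θ r)
  | abs a r => abs a (subst θ r)
  | unk π X => pact π (θ X)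

/-- The single substitution [X ↦ t]. -/
def single [DecidableEq σ.Unknown] (X : σ.Unknown) (t : PreTerm σ) :
    σ.Unknown → PreTerm σ :=
  Function.update (fun Y => unk 1 Y) X t

end PreTerm

/-- A permissive-nominal interpretation with domain D: equivariant interpretations of
atoms, tuples, term-formers, and atoms-abstraction (the latter satisfying
supp([a]x) = supp x \ {a}, as atoms-abstraction in permissive-nominal sets does). -/
structure Interp (σ : Sig) (D : Type*) [MulAction APerm D] where
  atomI : Atom → D
  unitI : D
  pairI : D → D → D
  appI : σ.TermFormer → D → D
  absI : Atom → D → D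
  atom_equivariant : ∀ (π : APerm) (a : Atom), π • atomI a = atomI (π a)
  unit_equivariant : ∀ π : APerm, π • unitI = unitI
  pair_equivariant : ∀ (π : APerm) (x y : D), π • pairI x y = pairI (π • x) (π • y)
  app_equivariant : ∀ (π : APerm) (f : σ.TermFormer) (x : D),
    π • appI f x = appI f (π • x)
  abs_equivariant : ∀ (π : APerm) (a : Atom) (x : D), π • absI a x = absI (π a) (π • x)
  abs_supp : ∀ (a : Atom) (x : D), supp (absI a x) = supp x \ {a}

/-- A valuation: maps each unknown X to an element supported within pmss X. -/
def IsValuation {σ : Sig} {D : Type*} [MulAction APerm D] (ς : σ.Unknown → D) : Prop :=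
  ∀ X : σ.Unknown, supp (ς X) ⊆ σ.pmss X

/-- The denotation of a term under an interpretation and a valuation. -/
def denot {σ : Sig} {D : Type*} [MulAction APerm D] (I : Interp σ D)
    (ς : σ.Unknown → D) : PreTerm σ → D
  | .atom a => I.atomI a
  | .unit => I.unitI
  | .pair r s => I.pairI (denot I ς r) (denot I ς s)
  | .app f r => I.appI f (denot I ς r)
  | .abs a r => I.absI a (denot I ς r)
  | .unk π X => π • ς X

theorem denot_pact {σ : Sig} {D : Type*} [MulAction APerm D] (I : Interp σ D)
    (ς : σ.Unknown → D) (π : APerm) (r : PreTerm σ) :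
    denot I ς (PreTerm.pact π r) = π • denot I ς r := by
  induction r with
  | atom a => exact (I.atom_equivariant π a).symm
  | unit => exact (I.unit_equivariant π).symm
  | pair r s hr hs =>
      simp [PreTerm.pact, denot, hr, hs, I.pair_equivariant]
  | app f r hr => simp [PreTerm.pact, denot, hr, I.app_equivariant]
  | abs a r hr => simp [PreTerm.pact, denot, hr, I.abs_equivariant]
  | unk π' Y => simp [PreTerm.pact, denot, mul_smul]

/-- Denotations commute with substitution: ⟦r[X ↦ t]⟧ς = ⟦r⟧(ς[X ↦ ⟦t⟧ς]). -/
theorem stmt_16 {σ : Sig} [DecidableEq σ.Unknown] {D : Type*} [MulAction APerm D]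
    (hD : IsPNSet D) (I : Interp σ D) (ς : σ.Unknown → D) (hς : IsValuation ς)
    (X : σ.Unknown) (t : PreTerm σ) (ht : PreTerm.fa t ⊆ σ.pmss X) (r : PreTerm σ) :
    denot I ς (PreTerm.subst (PreTerm.single X t) r) =
      denot I (Function.update ς X (denot I ς t)) r := by
  induction r with
  | atom a => rfl
  | unit => rfl
  | pair r s hr hs => simp [PreTerm.subst, denot, hr, hs]
  | app f r hr => simp [PreTerm.subst, denot, hr]
  | abs a r hr => simp [PreTerm.subst, denot, hr]
  | unk π Y =>
      by_cases h : Y = X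
      · subst h
        simp [PreTerm.subst, PreTerm.single, denot, denot_pact]
      · simp [PreTerm.subst, PreTerm.single, denot, Function.update_of_ne h,
          denot_pact]
end
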